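/- A Herglotz wave function $v_g(x) = \int_{\mathbb{S}^1} e^{ikx\cdot d} g(d)\,ds(d)$ with kernel $g \in L^2(\mathbb{S}^1)$ vanishes identically on $\mathbb{R}^2$ if and only if $g = 0$ almost everywhere on $\mathbb{S}^1$. -/

import Mathlib

open MeasureTheory Filter Metric

noncomputable section

abbrev Plane := EuclideanSpace ℝ (Fin 2)

def dir (θ : ℝ) : Plane := (WithLp.equiv 2 (Fin 2 → ℝ)).symm ![Real.cos θ, Real.sin θ]

def besselJ (n : ℕ) (t : ℝ) : ℝ :=
  (1 / Real.pi) * ∫ τ in (0:ℝ)..Real.pi, Real.cos (n * τ - t * Real.sin τ)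

def besselY (n : ℕ) (t : ℝ) : ℝ :=
  (1 / Real.pi) * (∫ τ in (0:ℝ)..Real.pi, Real.sin (t * Real.sin τ - n * τ))
    - (1 / Real.pi) * ∫ τ in Set.Ioi (0:ℝ),
        (Real.exp (n * τ) + (-1 : ℝ) ^ n * Real.exp (-(n * τ))) * Real.exp (-t * Real.sinh τ)

def hankelH1 (n : ℕ) (t : ℝ) : ℂ := (besselJ n t : ℂ) + Complex.I * (besselY n t : ℂ)

def uBinf (k R θ : ℝ) : ℂ :=
  -Complex.exp (-(Real.pi / 4 : ℂ) * Complex.I) * (Real.sqrt (2 / (Real.pi * k)) : ℂ) *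
    ((besselJ 0 (k * R) : ℂ) / hankelH1 0 (k * R)
      + 2 * ∑' n : ℕ, ((besselJ (n + 1) (k * R) : ℂ) / hankelH1 (n + 1) (k * R))
          * (Real.cos ((n + 1) * θ) : ℂ))

def lap (u : Plane → ℂ) (x : Plane) : ℂ :=
  ∑ i : Fin 2, deriv (fun t : ℝ => deriv (fun s : ℝ => u (x + s • EuclideanSpace.single i 1)) t) 0

def radialDeriv (u : Plane → ℂ) (x : Plane) : ℂ :=
  deriv (fun t : ℝ => u (t • (‖x‖⁻¹ • x))) ‖x‖

def Sommerfeld (k : ℝ) (u : Plane → ℂ) : Prop :=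
  ∀ ε > 0, ∃ R₀ : ℝ, ∀ x : Plane, R₀ ≤ ‖x‖ →
    ‖(Real.sqrt ‖x‖ : ℂ) * (radialDeriv u x - Complex.I * k * u x)‖ < ε

def IsFarFieldOf (k : ℝ) (us uinf : Plane → ℂ) : Prop :=
  ∃ C R₀ : ℝ, 0 < R₀ ∧ ∀ x : Plane, R₀ ≤ ‖x‖ →
    ‖us x - Complex.exp ((Real.pi / 4 : ℂ) * Complex.I) / (Real.sqrt (8 * k * Real.pi) : ℂ)
        * (Complex.exp (Complex.I * (k * ‖x‖ : ℝ)) / (Real.sqrt ‖x‖ : ℂ))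
        * uinf (‖x‖⁻¹ • x)‖ ≤ C / ‖x‖ ^ ((3:ℝ) / 2)

def herglotz (k : ℝ) (g : ℝ → ℂ) (x : Plane) : ℂ :=
  ∫ θ in (0:ℝ)..(2 * Real.pi), Complex.exp (Complex.I * (k * inner ℝ x (dir θ) : ℝ)) * g θ

def farFieldOp (k R : ℝ) (z : Plane) (g : ℝ → ℂ) (φ : ℝ) : ℂ :=
  ∫ ψ in (0:ℝ)..(2 * Real.pi),
    Complex.exp (Complex.I * (k * inner ℝ z (dir ψ - dir φ) : ℝ)) * uBinf k R (φ - ψ) * g ψ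

def muS : Measure ℝ := volume.restrict (Set.Ioc 0 (2 * Real.pi))

def H1normSq (S : Set Plane) (w : Plane → ℂ) : ℝ :=
  ∫ x in S, (‖w x‖ ^ 2 + ‖fderiv ℝ w x‖ ^ 2)

/-! The plane waves `d ↦ exp (i ⟪ξ, d⟫)`, `ξ ∈ ℝ²`, restricted to the unit circle are
closed under products and conjugation and separate points, so by Stone–Weierstrass their span
is dense in `C(S¹, ℂ)`. If `v_g` vanishes, the bounded functional `f ↦ ∫ f(d) g(d) ds(d)` kills
every plane wave (its value at the plane wave of `ξ` is `v_g(ξ / k)`), hence every continuous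
function and in particular every Fourier mode `e^{inθ}`; Parseval's identity then forces
`g = 0`. -/

open Complex Set

section PlaneWave

variable {E : Type*} [NormedAddCommGroup E] [InnerProductSpace ℝ E]
  {X : Type*} [TopologicalSpace X]

lemma AddChar.adjoin_range_le_span {R G A : Type*} [CommSemiring R] [StarRing R] [AddGroup G]
    [Semiring A] [StarRing A] [Algebra R A] [StarModule R A] (ψ : AddChar G A)
    (hψ : ∀ g, star (ψ g) = ψ (-g)) :
    Subalgebra.toSubmodule (StarAlgebra.adjoin R (range ψ)).toSubalgebra ≤
      Submodule.span R (range ψ) := by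
  rw [StarAlgebra.adjoin_eq_span]
  refine Submodule.span_mono (Submonoid.closure_le (S := MonoidHom.mrange ψ.toMonoidHom).mpr ?_)
  rintro _ (⟨g, rfl⟩ | ⟨g, hg⟩)
  · exact ⟨Multiplicative.ofAdd g, rfl⟩
  · refine ⟨Multiplicative.ofAdd (-g), ?_⟩
    simp [← hψ, hg]

lemma exists_exp_inner_ne {v w : E} (hvw : v ≠ w) :
    ∃ ξ : E, exp (I * (inner ℝ ξ v : ℝ)) ≠ exp (I * (inner ℝ ξ w : ℝ)) := by
  have hne : v - w ≠ 0 := sub_ne_zero.mpr hvw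
  refine ⟨(Real.pi / ‖v - w‖ ^ 2) • (v - w), fun h => ?_⟩
  have hphase : inner ℝ ((Real.pi / ‖v - w‖ ^ 2) • (v - w)) v
      - inner ℝ ((Real.pi / ‖v - w‖ ^ 2) • (v - w)) w = Real.pi := by
    rw [← inner_sub_right, real_inner_smul_left, real_inner_self_eq_norm_sq]
    field_simp [norm_ne_zero_iff.mpr hne]
  have : exp (I * (Real.pi : ℝ)) = 1 := by
    rw [← hphase, ofReal_sub, mul_sub, exp_sub, h, div_self (exp_ne_zero _)]
  rw [mul_comm, exp_pi_mul_I] at this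
  norm_num at this

def planeWave (ι : C(X, E)) : AddChar E C(X, ℂ) where
  toFun ξ := ⟨fun p => exp (I * (inner ℝ ξ (ι p) : ℝ)), by fun_prop⟩
  map_zero_eq_one' := by ext; simp
  map_add_eq_mul' ξ η := by ext p; simp [inner_add_left, mul_add, exp_add]

@[simp] lemma planeWave_apply (ι : C(X, E)) (ξ : E) (p : X) :
    planeWave ι ξ p = exp (I * (inner ℝ ξ (ι p) : ℝ)) := rfl

lemma star_planeWave (ι : C(X, E)) (ξ : E) : star (planeWave ι ξ) = planeWave ι (-ξ) := by
  ext p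
  simp [← exp_conj]

lemma dense_span_range_planeWave [CompactSpace X] {ι : C(X, E)} (hι : Function.Injective ι) :
    Dense (Submodule.span ℂ (range (planeWave ι)) : Set C(X, ℂ)) := by
  set A := StarAlgebra.adjoin ℂ (range (planeWave ι))
  have hsep : A.SeparatesPoints := by
    intro p q hpq
    obtain ⟨ξ, hξ⟩ := exists_exp_inner_ne (hι.ne hpq)
    exact ⟨_, ⟨planeWave ι ξ, StarAlgebra.subset_adjoin ℂ _ ⟨ξ, rfl⟩, rfl⟩, hξ⟩
  have hdense : Dense (A : Set C(X, ℂ)) := by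
    rw [dense_iff_closure_eq, ← StarSubalgebra.topologicalClosure_coe,
      ContinuousMap.starSubalgebra_topologicalClosure_eq_top_of_separatesPoints A hsep]
    rfl
  exact hdense.mono ((planeWave ι).adjoin_range_le_span (star_planeWave ι))

end PlaneWave

section IntegralCompMul

variable {X Y : Type*} [TopologicalSpace X] [CompactSpace X]
  [TopologicalSpace Y] [MeasurableSpace Y] [OpensMeasurableSpace Y] {μ : Measure Y}

lemma integrable_continuousMap_comp_mul {ι : Y → X} (hι : Continuous ι) {w : Y → ℂ}
    (hw : Integrable w μ) (f : C(X, ℂ)) :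
    Integrable (fun y => f (ι y) * w y) μ :=
  hw.bdd_mul (f.continuous.comp hι).aestronglyMeasurable
    (ae_of_all _ fun y => f.norm_coe_le_norm (ι y))

def integralCompMulCLM {ι : Y → X} (hι : Continuous ι) {w : Y → ℂ} (hw : Integrable w μ) :
    C(X, ℂ) →L[ℂ] ℂ :=
  LinearMap.mkContinuous
    { toFun f := ∫ y, f (ι y) * w y ∂μ
      map_add' f₁ f₂ := by
        simp only [ContinuousMap.add_apply, add_mul]
        exact integral_add (integrable_continuousMap_comp_mul hι hw f₁)
          (integrable_continuousMap_comp_mul hι hw f₂)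
      map_smul' c f := by
        simp only [ContinuousMap.smul_apply, smul_eq_mul, mul_assoc, integral_const_mul,
          RingHom.id_apply] }
    (∫ y, ‖w y‖ ∂μ) fun f => by
      rw [mul_comm, ← integral_const_mul]
      refine norm_integral_le_of_norm_le (hw.norm.const_mul _) (ae_of_all _ fun y => ?_)
      rw [norm_mul]
      gcongr
      exact f.norm_coe_le_norm (ι y)

@[simp] lemma integralCompMulCLM_apply {ι : Y → X} (hι : Continuous ι) {w : Y → ℂ}
    (hw : Integrable w μ) (f : C(X, ℂ)) :
    integralCompMulCLM hι hw f = ∫ y, f (ι y) * w y ∂μ :=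
  rfl

end IntegralCompMul

lemma ae_eq_zero_of_fourierCoeffOn_eq_zero {a b : ℝ} (hab : a < b) {f : ℝ → ℂ}
    (hf : MemLp f 2 (volume.restrict (Ioc a b))) (hcoeff : ∀ n, fourierCoeffOn hab f n = 0) :
    f =ᵐ[volume.restrict (Ioc a b)] 0 := by
  have hparseval := hasSum_sq_fourierCoeffOn hab hf
  simp only [hcoeff, norm_zero, zero_pow two_ne_zero] at hparseval
  have hnorm : ∫ x in Ioc a b, ‖f x‖ ^ 2 = 0 := by
    rw [← intervalIntegral.integral_of_le hab.le]
    simpa [sub_ne_zero.mpr hab.ne', hab.ne] using hasSum_zero.unique hparseval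
  rw [integral_eq_zero_iff_of_nonneg (fun x => by positivity)
    (hf.integrable_norm_pow two_ne_zero)] at hnorm
  filter_upwards [hnorm] with x hx
  simpa using hx

instance : Fact (0 < 2 * Real.pi) := ⟨Real.two_pi_pos⟩

def circleDir : C(AddCircle (2 * Real.pi), Plane) :=
  ⟨fun p => orthonormalBasisOneI.repr (AddCircle.homeomorphCircle' p), by fun_prop⟩

lemma circleDir_coe (θ : ℝ) : circleDir θ = dir θ := by
  change orthonormalBasisOneI.repr (Circle.exp θ : ℂ) = dir θ
  ext i
  fin_cases i <;> simp [dir, Circle.coe_exp, exp_ofReal_mul_I_re, exp_ofReal_mul_I_im]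

lemma circleDir_injective : Function.Injective circleDir :=
  orthonormalBasisOneI.repr.injective.comp <|
    Subtype.val_injective.comp AddCircle.homeomorphCircle'.injective

lemma herglotz_eq_integralCompMulCLM (k : ℝ) {g : ℝ → ℂ} (hg : Integrable g muS)
    (x : Plane) :
    herglotz k g x = integralCompMulCLM (ι := ((↑) : ℝ → AddCircle (2 * Real.pi)))
      continuous_quotient_mk' hg (planeWave circleDir (k • x)) := by
  rw [herglotz, intervalIntegral.integral_of_le Real.two_pi_pos.le]
  simp [muS, circleDir_coe, real_inner_smul_left]

/-- A Herglotz wave function vanishes identically iff its kernel vanishes a.e. -/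
theorem herglotz_vanishes_iff_kernel_zero (k : ℝ) (hk : 0 < k)
    (g : ℝ → ℂ) (hg : MemLp g 2 muS) :
    (∀ x : Plane, herglotz k g x = 0) ↔ g =ᵐ[muS] 0 := by
  have hgi : Integrable g muS := MemLp.integrable (μ := volume.restrict _) one_le_two hg
  refine ⟨fun hv => ?_, fun hg0 x => ?_⟩
  · have hΛ : integralCompMulCLM (ι := ((↑) : ℝ → AddCircle (2 * Real.pi)))
        continuous_quotient_mk' hgi = 0 := by
      refine ContinuousLinearMap.ext_on (dense_span_range_planeWave circleDir_injective) ?_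
      rintro _ ⟨ξ, rfl⟩
      rw [zero_apply, ← smul_inv_smul₀ hk.ne' ξ, ← herglotz_eq_integralCompMulCLM]
      exact hv _
    refine ae_eq_zero_of_fourierCoeffOn_eq_zero Real.two_pi_pos hg fun n => ?_
    rw [fourierCoeffOn_eq_integral, sub_zero, intervalIntegral.integral_of_le Real.two_pi_pos.le]
    simpa [muS] using congr($hΛ (fourier (-n)))
  · rw [herglotz_eq_integralCompMulCLM k hgi, integralCompMulCLM_apply]
    exact integral_eq_zero_of_ae (by filter_upwards [hg0] with θ hθ; simp [hθ])
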